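/- Let M be a finite von Neumann algebra with faithful normal trace τ, and let F be the convex hull of the set of coefficients Φ_ξ of vectors ξ = Σ a_i ⊗ b_i lying in correspondences H_φ associated to normal completely positive maps φ : M → M with compact extension operator T_φ. Then F is a convex cone; for every b ∈ M and Φ ∈ F the completely positive map x ↦ b* Φ(x) b belongs to F; and the extension operator T_Φ is a compact operator on L²(M,τ) for every Φ ∈ F. -/

import Mathlib

/- Common framework: a finite von Neumann algebra `M` on a Hilbert space `H` with a faithful
normal trace, normal completely positive maps, bimodular maps, and the `2`-norm. -/

open scoped ComplexOrder InnerProductSpace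
open Filter Topology

noncomputable section

universe u

variable (H : Type u) [NormedAddCommGroup H] [InnerProductSpace ℂ H] [CompleteSpace H]

/-- The `2`-norm `‖x‖₂ = τ(x*x)^{1/2}` associated to a trace functional `τ`. -/
def twoNorm (τ : (H →L[ℂ] H) →ₗ[ℂ] ℂ) (x : H →L[ℂ] H) : ℝ :=
  Real.sqrt (τ (star x * x)).re

/-- A linear functional on `B(H)` is normal (relative to the von Neumann algebra `M`) if it is
continuous for the weak operator topology on bounded balls of `M`. -/
def IsNormalFunctional (M : VonNeumannAlgebra H) (τ : (H →L[ℂ] H) →ₗ[ℂ] ℂ) : Prop :=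
  ∀ r : ℝ, ContinuousOn
    (fun T : H →WOT[ℂ] H => τ ((ContinuousLinearMapWOT.linearEquiv (σ := RingHom.id ℂ) (E := H) (F := H) ℂ) T))
    ((ContinuousLinearMapWOT.linearEquiv (σ := RingHom.id ℂ) (E := H) (F := H) ℂ).symm '' (Metric.closedBall 0 r ∩ (M : Set (H →L[ℂ] H))))

/-- A faithful normal tracial state on a von Neumann algebra `M ⊆ B(H)`. -/
structure FaithfulNormalTrace (M : VonNeumannAlgebra H) where
  τ : (H →L[ℂ] H) →ₗ[ℂ] ℂ
  pos : ∀ x ∈ M, 0 ≤ τ (star x * x)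
  faithful : ∀ x ∈ M, τ (star x * x) = 0 → x = 0
  tracial : ∀ x ∈ M, ∀ y ∈ M, τ (x * y) = τ (y * x)
  unital : τ 1 = 1
  normal : IsNormalFunctional H M τ

/-- A linear map `φ : B(H) → B(H)` is normal (as a map of the von Neumann algebra `M`) if it is
continuous for the weak operator topology on bounded balls of `M`. -/
def IsNormalMap (M : VonNeumannAlgebra H) (φ : (H →L[ℂ] H) →ₗ[ℂ] (H →L[ℂ] H)) : Prop :=
  ∀ r : ℝ, ContinuousOn
    (fun T : H →WOT[ℂ] H =>
      (ContinuousLinearMapWOT.linearEquiv (σ := RingHom.id ℂ) (E := H) (F := H) ℂ).symm (φ ((ContinuousLinearMapWOT.linearEquiv (σ := RingHom.id ℂ) (E := H) (F := H) ℂ) T)))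
    ((ContinuousLinearMapWOT.linearEquiv (σ := RingHom.id ℂ) (E := H) (F := H) ℂ).symm '' (Metric.closedBall 0 r ∩ (M : Set (H →L[ℂ] H))))

/-- Complete positivity of `φ` on `M`: for all `x₁, …, xₙ ∈ M` and `ξ₁, …, ξₙ ∈ H`,
`∑_{i,j} ⟨ξᵢ, φ(xᵢ* xⱼ) ξⱼ⟩ ≥ 0`. -/
def IsCompletelyPositive (M : VonNeumannAlgebra H)
    (φ : (H →L[ℂ] H) →ₗ[ℂ] (H →L[ℂ] H)) : Prop :=
  ∀ (n : ℕ) (x : Fin n → (H →L[ℂ] H)) (ξ : Fin n → H), (∀ i, x i ∈ M) →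
    0 ≤ ∑ i, ∑ j, ⟪ξ i, φ (star (x i) * x j) (ξ j)⟫_ℂ

/-- `φ` is a normal completely positive map from `M` to `M`. -/
def IsNormalCP (M : VonNeumannAlgebra H) (φ : (H →L[ℂ] H) →ₗ[ℂ] (H →L[ℂ] H)) : Prop :=
  (∀ x ∈ M, φ x ∈ M) ∧ IsNormalMap H M φ ∧ IsCompletelyPositive H M φ

/-- `N`-bimodularity of a map `φ : M → M`: `φ(axb) = aφ(x)b` for `a, b ∈ N`, `x ∈ M`. -/
def IsBimodular (M N : VonNeumannAlgebra H) (φ : (H →L[ℂ] H) →ₗ[ℂ] (H →L[ℂ] H)) : Prop :=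
  ∀ a ∈ N, ∀ b ∈ N, ∀ x ∈ M, φ (a * x * b) = a * φ x * b

/-!
Coefficients `x ↦ ∑ᵢⱼ bᵢ* φ(aᵢ* x aⱼ) bⱼ` are stable under multiplication by `c ≥ 0` (replace
`bᵢ` by `√c bᵢ`) and under conjugation by `b ∈ M` (replace `bᵢ` by `bᵢ b`), and both operations
are linear, so they preserve the convex hull. For compactness, if `T` extends `φ` then
`b* R_{b'} T a* R_{a'}` extends `x ↦ b* φ(a* x a') b'`, where `R_c` is right multiplication by
`c` on `L²(M)`: it is bounded since `‖xcΩ‖ = ‖c*x*Ω‖ ≤ ‖c‖ ‖xΩ‖` by traciality. Compact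
operators form a subspace, so compact extensions pass to sums and convex combinations.
-/

namespace LinearMap

variable {𝕜 E F G : Type*} [NontriviallyNormedField 𝕜] [AddCommGroup E] [Module 𝕜 E]
  [NormedAddCommGroup F] [NormedSpace 𝕜 F] [NormedAddCommGroup G] [NormedSpace 𝕜 G]
  [CompleteSpace G]

theorem exists_continuousLinearMap_comp_eq_of_norm_le (e : E →ₗ[𝕜] F) (g : E →ₗ[𝕜] G)
    (he : DenseRange e) (C : ℝ) (hC : ∀ x, ‖g x‖ ≤ C * ‖e x‖) :
    ∃ T : F →L[𝕜] G, ∀ x, T (e x) = g x := by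
  have hker : ker e ≤ ker g := fun x hx => by
    simpa [mem_ker.mp hx] using hC x
  let f₀ : range e →ₗ[𝕜] G := (ker e).liftQ g hker ∘ₗ e.quotKerEquivRange.symm.toLinearMap
  have hf₀ : ∀ x, f₀ ⟨e x, mem_range_self e x⟩ = g x := fun x => by
    simp [f₀, quotKerEquivRange_symm_apply_image]
  have hbound : ∀ ξ : range e, ‖f₀ ξ‖ ≤ C * ‖ξ‖ := by
    rintro ⟨_, x, rfl⟩
    simpa [hf₀] using hC x
  have hdense : DenseRange (range e).subtypeL := by
    apply Dense.denseRange_val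
    rw [coe_range]
    exact he
  refine ⟨(f₀.mkContinuous C hbound).extend (range e).subtypeL, fun x => ?_⟩
  have hext := (f₀.mkContinuous C hbound).extend_eq hdense
    isUniformEmbedding_subtype_val.isUniformInducing ⟨e x, mem_range_self e x⟩
  simpa [hf₀] using hext

end LinearMap

section Coefficients

variable {H : Type u} [NormedAddCommGroup H] [InnerProductSpace ℂ H] [CompleteSpace H]
  {M : VonNeumannAlgebra H} {tr : FaithfulNormalTrace H M} {Ω : H}

theorem norm_star_apply_eq_norm_apply (hΩ : ∀ x ∈ M, ∀ y ∈ M, ⟪x Ω, y Ω⟫_ℂ = tr.τ (star x * y))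
    {u : H →L[ℂ] H} (hu : u ∈ M) : ‖star u Ω‖ = ‖u Ω‖ := by
  have h : ⟪star u Ω, star u Ω⟫_ℂ = ⟪u Ω, u Ω⟫_ℂ := by
    rw [hΩ _ (star_mem hu) _ (star_mem hu), hΩ u hu u hu, star_star,
      tr.tracial u hu _ (star_mem hu)]
  rw [norm_eq_sqrt_re_inner (𝕜 := ℂ), norm_eq_sqrt_re_inner (𝕜 := ℂ), h]

theorem norm_mul_apply_le (hΩ : ∀ x ∈ M, ∀ y ∈ M, ⟪x Ω, y Ω⟫_ℂ = tr.τ (star x * y))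
    {x c : H →L[ℂ] H} (hx : x ∈ M) (hc : c ∈ M) : ‖(x * c) Ω‖ ≤ ‖c‖ * ‖x Ω‖ :=
  calc ‖(x * c) Ω‖ = ‖star c (star x Ω)‖ := by
        rw [← norm_star_apply_eq_norm_apply hΩ (mul_mem hx hc), star_mul]; rfl
    _ ≤ ‖star c‖ * ‖star x Ω‖ := (star c).le_opNorm _
    _ = ‖c‖ * ‖x Ω‖ := by rw [norm_star, norm_star_apply_eq_norm_apply hΩ hx]

theorem exists_extension_mul_right (hΩ : ∀ x ∈ M, ∀ y ∈ M, ⟪x Ω, y Ω⟫_ℂ = tr.τ (star x * y))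
    (hcyc : Dense {ξ : H | ∃ x ∈ M, ξ = x Ω}) {c : H →L[ℂ] H} (hc : c ∈ M) :
    ∃ R : H →L[ℂ] H, ∀ x ∈ M, R (x Ω) = (x * c) Ω := by
  let ev (η : H) : M.toStarSubalgebra →ₗ[ℂ] H :=
    { toFun := fun x => (x : H →L[ℂ] H) η
      map_add' := fun _ _ => rfl
      map_smul' := fun _ _ => rfl }
  have hdense : DenseRange (ev Ω) := hcyc.mono <| by
    rintro _ ⟨x, hx, rfl⟩
    exact ⟨⟨x, hx⟩, rfl⟩
  -- `(x * c) Ω = x (c Ω)`, so the map to be extended is evaluation at `c Ω`.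
  obtain ⟨R, hR⟩ := (ev Ω).exists_continuousLinearMap_comp_eq_of_norm_le (ev (c Ω)) hdense ‖c‖
    fun x => norm_mul_apply_le hΩ x.2 hc
  exact ⟨R, fun x hx => hR ⟨x, hx⟩⟩

variable (M Ω) in
def compactlyExtendable : Submodule ℂ ((H →L[ℂ] H) → (H →L[ℂ] H)) where
  carrier := {f | ∃ T : H →L[ℂ] H, IsCompactOperator T ∧ ∀ x ∈ M, T (x Ω) = f x Ω}
  add_mem' := by
    rintro f g ⟨S, hS, hSf⟩ ⟨T, hT, hTg⟩
    exact ⟨S + T, hS.add hT, fun x hx => by simp [hSf x hx, hTg x hx]⟩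
  zero_mem' := ⟨0, isCompactOperator_zero, fun _ _ => rfl⟩
  smul_mem' := by
    rintro c f ⟨T, hT, hTf⟩
    exact ⟨c • T, hT.smul c, fun x hx => by simp [hTf x hx]⟩

theorem comp_mul_mul_mem_compactlyExtendable
    (hΩ : ∀ x ∈ M, ∀ y ∈ M, ⟪x Ω, y Ω⟫_ℂ = tr.τ (star x * y))
    (hcyc : Dense {ξ : H | ∃ x ∈ M, ξ = x Ω}) {f : (H →L[ℂ] H) → (H →L[ℂ] H)}
    (hf : f ∈ compactlyExtendable M Ω) {a a' : H →L[ℂ] H} (ha : a ∈ M) (ha' : a' ∈ M) :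
    (fun x => f (a * x * a')) ∈ compactlyExtendable M Ω := by
  obtain ⟨T, hT, hTf⟩ := hf
  obtain ⟨R, hR⟩ := exists_extension_mul_right hΩ hcyc ha'
  refine ⟨T ∘L a ∘L R, hT.comp_clm (a ∘L R), fun x hx => ?_⟩
  calc T (a (R (x Ω))) = T ((a * x * a') Ω) := by rw [hR x hx, mul_assoc]; rfl
    _ = f (a * x * a') Ω := hTf _ (mul_mem (mul_mem ha hx) ha')

theorem mul_mul_mem_compactlyExtendable
    (hΩ : ∀ x ∈ M, ∀ y ∈ M, ⟪x Ω, y Ω⟫_ℂ = tr.τ (star x * y))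
    (hcyc : Dense {ξ : H | ∃ x ∈ M, ξ = x Ω}) {f : (H →L[ℂ] H) → (H →L[ℂ] H)}
    (hf : f ∈ compactlyExtendable M Ω) (hfM : ∀ x ∈ M, f x ∈ M) (b : H →L[ℂ] H)
    {b' : H →L[ℂ] H} (hb' : b' ∈ M) :
    (fun x => b * f x * b') ∈ compactlyExtendable M Ω := by
  obtain ⟨T, hT, hTf⟩ := hf
  obtain ⟨R, hR⟩ := exists_extension_mul_right hΩ hcyc hb'
  refine ⟨b ∘L R ∘L T, hT.clm_comp (b ∘L R), fun x hx => ?_⟩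
  calc b (R (T (x Ω))) = b ((f x * b') Ω) := by rw [hTf x hx, hR _ (hfM x hx)]
    _ = (b * f x * b') Ω := by rw [mul_assoc]; rfl

variable (M Ω) in
theorem convex_setOf_coe_mem_compactlyExtendable :
    Convex ℝ {Θ : (H →L[ℂ] H) →ₗ[ℂ] (H →L[ℂ] H) | ⇑Θ ∈ compactlyExtendable M Ω} :=
  fun Θ₁ h₁ Θ₂ h₂ s t _ _ _ => by
    show s • ⇑Θ₁ + t • ⇑Θ₂ ∈ compactlyExtendable M Ω
    exact add_mem (Submodule.smul_of_tower_mem _ s h₁) (Submodule.smul_of_tower_mem _ t h₂)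

variable (M Ω) in
def coefficientSet : Set ((H →L[ℂ] H) →ₗ[ℂ] (H →L[ℂ] H)) :=
  {Φ | ∃ φ : (H →L[ℂ] H) →ₗ[ℂ] (H →L[ℂ] H), IsNormalCP H M φ ∧
      (∃ T : H →L[ℂ] H, IsCompactOperator ⇑T ∧ ∀ x ∈ M, T (x Ω) = (φ x) Ω) ∧
      ∃ (n : ℕ) (a b : Fin n → (H →L[ℂ] H)), (∀ i, a i ∈ M ∧ b i ∈ M) ∧
        ∀ x : H →L[ℂ] H, Φ x = ∑ i, ∑ j, star (b i) * φ (star (a i) * x * a j) * b j}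

theorem coe_mem_compactlyExtendable_of_mem_coefficientSet
    (hΩ : ∀ x ∈ M, ∀ y ∈ M, ⟪x Ω, y Ω⟫_ℂ = tr.τ (star x * y))
    (hcyc : Dense {ξ : H | ∃ x ∈ M, ξ = x Ω}) {Φ : (H →L[ℂ] H) →ₗ[ℂ] (H →L[ℂ] H)}
    (hΦ : Φ ∈ coefficientSet M Ω) : ⇑Φ ∈ compactlyExtendable M Ω := by
  obtain ⟨φ, ⟨hφM, -, -⟩, hφ, n, a, b, hab, hΦ⟩ := hΦ
  have hΦ_eq : ⇑Φ = ∑ i, ∑ j, fun x => star (b i) * φ (star (a i) * x * a j) * b j :=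
    funext fun x => by simp [hΦ x]
  rw [hΦ_eq]
  refine Submodule.sum_mem _ fun i _ => Submodule.sum_mem _ fun j _ => ?_
  have ha := star_mem (hab i).1
  exact mul_mul_mem_compactlyExtendable hΩ hcyc
    (comp_mul_mul_mem_compactlyExtendable hΩ hcyc hφ ha (hab j).1)
    (fun x hx => hφM _ (mul_mem (mul_mem ha hx) (hab j).1)) _ (hab j).2

theorem smul_mem_coefficientSet {Φ : (H →L[ℂ] H) →ₗ[ℂ] (H →L[ℂ] H)}
    (hΦ : Φ ∈ coefficientSet M Ω) {c : ℝ} (hc : 0 ≤ c) : c • Φ ∈ coefficientSet M Ω := by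
  obtain ⟨φ, hφ, hT, n, a, b, hab, hΦ⟩ := hΦ
  refine ⟨φ, hφ, hT, n, a, fun i => (Real.sqrt c : ℂ) • b i,
    fun i => ⟨(hab i).1, M.toStarSubalgebra.smul_mem (hab i).2 _⟩, fun x => ?_⟩
  simp only [LinearMap.smul_apply, hΦ x, star_smul, smul_mul_assoc, mul_smul_comm, smul_smul,
    Complex.coe_smul, RCLike.star_def, conj_trivial, Real.mul_self_sqrt hc, Finset.smul_sum]

theorem conj_mem_coefficientSet {Φ Ψ : (H →L[ℂ] H) →ₗ[ℂ] (H →L[ℂ] H)}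
    (hΦ : Φ ∈ coefficientSet M Ω) {b : H →L[ℂ] H} (hb : b ∈ M)
    (hΨ : ∀ x, Ψ x = star b * Φ x * b) : Ψ ∈ coefficientSet M Ω := by
  obtain ⟨φ, hφ, hT, n, a, b', hab, hΦ⟩ := hΦ
  refine ⟨φ, hφ, hT, n, a, fun i => b' i * b, fun i => ⟨(hab i).1, mul_mem (hab i).2 hb⟩,
    fun x => ?_⟩
  simp only [hΨ x, hΦ x, Finset.mul_sum, Finset.sum_mul, star_mul, mul_assoc]

open Pointwise in
theorem smul_mem_convexHull_coefficientSet {Φ : (H →L[ℂ] H) →ₗ[ℂ] (H →L[ℂ] H)}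
    (hΦ : Φ ∈ convexHull ℝ (coefficientSet M Ω)) {c : ℝ} (hc : 0 ≤ c) :
    c • Φ ∈ convexHull ℝ (coefficientSet M Ω) := by
  have h : c • Φ ∈ convexHull ℝ (c • coefficientSet M Ω) := by
    rw [convexHull_smul]
    exact Set.smul_mem_smul_set hΦ
  refine convexHull_mono ?_ h
  rintro _ ⟨Θ, hΘ, rfl⟩
  exact smul_mem_coefficientSet hΘ hc

theorem conj_mem_convexHull_coefficientSet {Φ Ψ : (H →L[ℂ] H) →ₗ[ℂ] (H →L[ℂ] H)}
    (hΦ : Φ ∈ convexHull ℝ (coefficientSet M Ω)) {b : H →L[ℂ] H} (hb : b ∈ M)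
    (hΨ : ∀ x, Ψ x = star b * Φ x * b) : Ψ ∈ convexHull ℝ (coefficientSet M Ω) := by
  let conj : ((H →L[ℂ] H) →ₗ[ℂ] (H →L[ℂ] H)) →ₗ[ℝ] ((H →L[ℂ] H) →ₗ[ℂ] (H →L[ℂ] H)) :=
    (LinearMap.llcomp ℂ _ _ _
      (LinearMap.mulLeft ℂ (star b) ∘ₗ LinearMap.mulRight ℂ b)).restrictScalars ℝ
  have hconj : ∀ Θ x, conj Θ x = star b * Θ x * b := fun Θ x => (mul_assoc _ _ _).symm
  have h : conj Φ ∈ convexHull ℝ (conj '' coefficientSet M Ω) := by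
    rw [← conj.image_convexHull]
    exact Set.mem_image_of_mem conj hΦ
  rw [show Ψ = conj Φ from LinearMap.ext fun x => by rw [hΨ, hconj]]
  refine convexHull_mono ?_ h
  rintro _ ⟨Θ, hΘ, rfl⟩
  exact conj_mem_coefficientSet hΘ hb (hconj Θ)

end Coefficients

/-- **Lemma 4.7.** Let `F` be the convex hull of the set of coefficients `Φ_ξ` of finite-rank
vectors `ξ = ∑ aᵢ ⊗ bᵢ` of correspondences `H_φ` associated to normal completely positive maps
`φ : M → M` with compact extension operator (so `Φ_ξ(x) = ∑_{i,j} bᵢ* φ(aᵢ* x aⱼ) bⱼ`).  Then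
`F` is a convex cone, `F` is stable under `Φ ↦ b*Φ(·)b` for every `b ∈ M`, and every `Φ ∈ F`
has a compact extension operator on `L²(M,τ)`. -/
theorem coefficient_convex_cone
    (M : VonNeumannAlgebra H) (tr : FaithfulNormalTrace H M)
    -- `H` is the standard form `L²(M,τ)` with trace vector `Ω`
    (Ω : H) (hΩ : ∀ x ∈ M, ∀ y ∈ M, ⟪x Ω, y Ω⟫_ℂ = tr.τ (star x * y))
    (hcyc : Dense {ξ : H | ∃ x ∈ M, ξ = x Ω})
    -- the set `S` of coefficients of finite-rank vectors in correspondences `H_φ`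
    (S F : Set ((H →L[ℂ] H) →ₗ[ℂ] (H →L[ℂ] H)))
    (hS : S = {Φ | ∃ φ : (H →L[ℂ] H) →ₗ[ℂ] (H →L[ℂ] H), IsNormalCP H M φ ∧
      (∃ T : H →L[ℂ] H, IsCompactOperator ⇑T ∧ ∀ x ∈ M, T (x Ω) = (φ x) Ω) ∧
      ∃ (n : ℕ) (a b : Fin n → (H →L[ℂ] H)), (∀ i, a i ∈ M ∧ b i ∈ M) ∧
        ∀ x : H →L[ℂ] H, Φ x = ∑ i, ∑ j, star (b i) * φ (star (a i) * x * a j) * b j})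
    (hF : F = convexHull ℝ S) :
    -- `F` is a convex cone
    Convex ℝ F ∧ (∀ Φ ∈ F, ∀ c : ℝ, 0 < c → c • Φ ∈ F) ∧
    -- `F` is stable under conjugation by every `b ∈ M`
    (∀ b ∈ M, ∀ Φ ∈ F, ∀ Ψ : (H →L[ℂ] H) →ₗ[ℂ] (H →L[ℂ] H),
      (∀ x : H →L[ℂ] H, Ψ x = star b * Φ x * b) → Ψ ∈ F) ∧
    -- every `Φ ∈ F` has compact extension operator
    (∀ Φ ∈ F, ∃ T : H →L[ℂ] H, IsCompactOperator ⇑T ∧ ∀ x ∈ M, T (x Ω) = (Φ x) Ω) := by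
  change S = coefficientSet M Ω at hS
  subst hF hS
  refine ⟨convex_convexHull ℝ _, fun Φ hΦ c hc => smul_mem_convexHull_coefficientSet hΦ hc.le,
    fun b hb Φ hΦ Ψ hΨ => conj_mem_convexHull_coefficientSet hΦ hb hΨ, fun Φ hΦ => ?_⟩
  exact convexHull_min (fun Θ hΘ => coe_mem_compactlyExtendable_of_mem_coefficientSet hΩ hcyc hΘ)
    (convex_setOf_coe_mem_compactlyExtendable M Ω) hΦ
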